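/- arXiv:2105.01770 — 3 statements merged into one kernel-verified Lean document; each statement's English description precedes it below -/
import Mathlib

section
/- Let (M, C) be a duality pair over a ring R. Then the class M is closed under pure submodules and pure quotients: if 0 → A → B → C → 0 is a pure short exact sequence of R-modules with B ∈ M, then A ∈ M and C ∈ M. -/
open CategoryTheory MulOpposite

noncomputable section

/-- The character group `M⁺ = Hom_ℤ(M, ℚ/ℤ)`. -/
abbrev CharMod (M : Type) [AddCommGroup M] : Type := M →+ AddCircle (1 : ℚ)

/-- If `M` is a left `R`-module, `M⁺` is a right `R`-module (an `Rᵐᵒᵖ`-module). -/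
instance charRight (R : Type) [Ring R] (M : Type) [AddCommGroup M] [Module R M] :
    Module Rᵐᵒᵖ (CharMod M) where
  smul r f := f.comp (DistribMulAction.toAddMonoidHom M r.unop)
  one_smul f := by ext m; show f ((1 : R) • m) = f m; rw [one_smul]
  mul_smul r s f := by
    ext m
    show f ((r * s).unop • m) = f (s.unop • r.unop • m)
    rw [MulOpposite.unop_mul, mul_smul]
  smul_zero r := rfl
  smul_add r f g := rfl
  add_smul r s f := by
    ext m
    show f ((r + s).unop • m) = f (r.unop • m) + f (s.unop • m)
    rw [MulOpposite.unop_add, add_smul, map_add]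
  zero_smul f := by
    ext m
    show f ((0 : R) • m) = 0
    rw [zero_smul, map_zero]

/-- If `M` is a right `R`-module (`Rᵐᵒᵖ`-module), `M⁺` is a left `R`-module. -/
instance charLeft (R : Type) [Ring R] (M : Type) [AddCommGroup M] [Module Rᵐᵒᵖ M] :
    Module R (CharMod M) where
  smul r f := f.comp (DistribMulAction.toAddMonoidHom M (op r))
  one_smul f := by ext m; show f ((op (1:R)) • m) = f m; rw [op_one, one_smul]
  mul_smul r s f := by
    ext m
    show f (op (r * s) • m) = f (op s • op r • m)
    rw [op_mul, mul_smul]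
  smul_zero r := rfl
  smul_add r f g := rfl
  add_smul r s f := by
    ext m
    show f (op (r + s) • m) = f (op r • m) + f (op s • m)
    rw [show (op (r+s) : Rᵐᵒᵖ) = op r + op s from rfl, add_smul, map_add]
  zero_smul f := by
    ext m
    show f (op (0 : R) • m) = 0
    rw [op_zero, zero_smul, map_zero]

variable (R : Type) [Ring R]

@[simp] lemma charRight_smul_apply {M : Type} [AddCommGroup M] [Module R M]
    (r : Rᵐᵒᵖ) (f : CharMod M) (m : M) : (r • f) m = f (r.unop • m) := rfl

@[simp] lemma charLeft_smul_apply {M : Type} [AddCommGroup M] [Module Rᵐᵒᵖ M]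
    (r : R) (f : CharMod M) (m : M) : (r • f) m = f (op r • m) := rfl

/-- The contravariant dual (character) map on a map of left `R`-modules. -/
def charDual {M N : Type} [AddCommGroup M] [AddCommGroup N] [Module R M] [Module R N]
    (f : M →ₗ[R] N) : CharMod N →ₗ[Rᵐᵒᵖ] CharMod M where
  toFun c := c.comp f.toAddMonoidHom
  map_add' c c' := rfl
  map_smul' r c := by
    ext m
    show c (r.unop • f m) = c (f (r.unop • m))
    rw [f.map_smul]

/-- The contravariant dual (character) map on a map of right `R`-modules. -/
def charDual' {M N : Type} [AddCommGroup M] [AddCommGroup N] [Module Rᵐᵒᵖ M] [Module Rᵐᵒᵖ N]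
    (f : M →ₗ[Rᵐᵒᵖ] N) : CharMod N →ₗ[R] CharMod M where
  toFun c := c.comp f.toAddMonoidHom
  map_add' c c' := rfl
  map_smul' r c := by
    ext m
    show c (op r • f m) = c (f (op r • m))
    rw [f.map_smul]

end
open CategoryTheory CategoryTheory.Limits MulOpposite

noncomputable section

variable (R : Type) [Ring R]

/-- The character module `M⁺` of a left `R`-module, as a right `R`-module. -/
def charObj (M : ModuleCat.{0} R) : ModuleCat.{0} Rᵐᵒᵖ :=
  ModuleCat.of Rᵐᵒᵖ (CharMod M)

/-- The character module `A⁺` of a right `R`-module, as a left `R`-module. -/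
def charObj' (A : ModuleCat.{0} Rᵐᵒᵖ) : ModuleCat.{0} R :=
  ModuleCat.of R (CharMod A)

/-- The dual map `N⁺ ⟶ M⁺` of a map `M ⟶ N` of left `R`-modules. -/
def charMap {M N : ModuleCat.{0} R} (f : M ⟶ N) : charObj R N ⟶ charObj R M :=
  ModuleCat.ofHom (charDual R f.hom)

/-- `0 → X → Y → Z → 0` is a short exact sequence. -/
def IsShortExact {X Y Z : ModuleCat.{0} R} (i : X ⟶ Y) (p : Y ⟶ Z) : Prop :=
  ∃ w : i ≫ p = 0, (ShortComplex.mk i p w).ShortExact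

/-- A short exact sequence `0 → A → B → C → 0` of `R`-modules is pure if the dual
sequence `0 → C⁺ → B⁺ → A⁺ → 0` of character modules is split. -/
def IsPureSES {A B C : ModuleCat.{0} R} (i : A ⟶ B) (p : B ⟶ C) : Prop :=
  IsShortExact R i p ∧
    ∃ ρ : charObj R B ⟶ charObj R C, charMap R p ≫ ρ = 𝟙 (charObj R C)

/-- A duality pair over `R`: a class `𝓜` of `R`-modules and a class `𝓒` of `R°`-modules
such that `M ∈ 𝓜` iff `M⁺ ∈ 𝓒`, and `𝓒` is closed under direct summands and finite
direct sums (both classes being closed under isomorphism). -/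
structure IsDualityPair (𝓜 : Set (ModuleCat.{0} R)) (𝓒 : Set (ModuleCat.{0} Rᵐᵒᵖ)) :
    Prop where
  mem_iff : ∀ M : ModuleCat.{0} R, M ∈ 𝓜 ↔ charObj R M ∈ 𝓒
  isoClosed_left : ∀ {M N : ModuleCat.{0} R}, (M ≅ N) → M ∈ 𝓜 → N ∈ 𝓜
  isoClosed_right : ∀ {M N : ModuleCat.{0} Rᵐᵒᵖ}, (M ≅ N) → M ∈ 𝓒 → N ∈ 𝓒
  summand_closed : ∀ {M N : ModuleCat.{0} Rᵐᵒᵖ} (s : M ⟶ N) (r : N ⟶ M),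
    s ≫ r = 𝟙 M → N ∈ 𝓒 → M ∈ 𝓒
  biprod_closed : ∀ {M N : ModuleCat.{0} Rᵐᵒᵖ}, M ∈ 𝓒 → N ∈ 𝓒 → (M ⊞ N) ∈ 𝓒

/-- A duality pair over `R°`: a class `𝓒` of `R°`-modules and a class `𝓜` of `R`-modules
such that `A ∈ 𝓒` iff `A⁺ ∈ 𝓜`, and `𝓜` is closed under direct summands and finite
direct sums. -/
structure IsCoDualityPair (𝓒 : Set (ModuleCat.{0} Rᵐᵒᵖ)) (𝓜 : Set (ModuleCat.{0} R)) :
    Prop where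
  mem_iff : ∀ A : ModuleCat.{0} Rᵐᵒᵖ, A ∈ 𝓒 ↔ charObj' R A ∈ 𝓜
  isoClosed_left : ∀ {M N : ModuleCat.{0} Rᵐᵒᵖ}, (M ≅ N) → M ∈ 𝓒 → N ∈ 𝓒
  isoClosed_right : ∀ {M N : ModuleCat.{0} R}, (M ≅ N) → M ∈ 𝓜 → N ∈ 𝓜
  summand_closed : ∀ {M N : ModuleCat.{0} R} (s : M ⟶ N) (r : N ⟶ M),
    s ≫ r = 𝟙 M → N ∈ 𝓜 → M ∈ 𝓜
  biprod_closed : ∀ {M N : ModuleCat.{0} R}, M ∈ 𝓜 → N ∈ 𝓜 → (M ⊞ N) ∈ 𝓜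

/-- A semi-complete duality pair `(𝓛, 𝓐)`: a symmetric duality pair (both `(𝓛, 𝓐)` and
`(𝓐, 𝓛)` are duality pairs) such that `R ∈ 𝓛` and `𝓛` is closed under coproducts. -/
structure IsSemiCompleteDualityPair (𝓛 : Set (ModuleCat.{0} R))
    (𝓐 : Set (ModuleCat.{0} Rᵐᵒᵖ)) : Prop where
  pair : IsDualityPair R 𝓛 𝓐
  pair' : IsCoDualityPair R 𝓐 𝓛
  self_mem : ModuleCat.of R R ∈ 𝓛
  coprod_closed : ∀ {ι : Type} (f : ι → ModuleCat.{0} R), (∀ i, f i ∈ 𝓛) → (∐ f) ∈ 𝓛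

end
open CategoryTheory
noncomputable section

/-! Dualizing with `ℚ/ℤ` is exact because `ℚ/ℤ` is an injective abelian group, so a pure sequence
`0 → A → B → C → 0` dualizes to a split exact sequence `0 → C⁺ → B⁺ → A⁺ → 0`. Both `A⁺` and `C⁺`
are then direct summands of `B⁺ ∈ 𝓒`, hence lie in `𝓒`, i.e. `A, C ∈ 𝓜`. -/

lemma AddMonoidHom.exists_comp_eq_of_exact {A B C Q : Type*} [AddGroup A] [AddGroup B]
    [AddGroup C] [AddGroup Q] {f : A →+ B} {g : B →+ C} (hfg : Function.Exact f g)
    (hg : Function.Surjective g) {c : B →+ Q} (hc : c.comp f = 0) :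
    ∃ d : C →+ Q, d.comp g = c := by
  refine ⟨g.liftOfSurjective hg ⟨c, fun b hb => ?_⟩, g.liftOfRightInverse_comp _ _ _⟩
  obtain ⟨a, rfl⟩ := (hfg b).1 hb
  exact DFunLike.congr_fun hc a

section

variable {R : Type} [Ring R]

lemma charMap_comp {M N P : ModuleCat.{0} R} (f : M ⟶ N) (g : N ⟶ P) :
    charMap R (f ≫ g) = charMap R g ≫ charMap R f :=
  rfl

lemma charMap_zero (M N : ModuleCat.{0} R) : charMap R (0 : M ⟶ N) = 0 :=
  ModuleCat.hom_ext <| LinearMap.ext fun c =>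
    AddMonoidHom.ext fun _ => map_zero (show CharMod N from c)

lemma charMap_surjective_of_injective {M N : ModuleCat.{0} R} (f : M ⟶ N)
    (hf : Function.Injective f) : Function.Surjective (charMap R f) :=
  CharacterModule.dual_surjective_of_injective f.hom.toAddMonoidHom.toIntLinearMap hf

lemma charMap_exact_of_exact {A B C : ModuleCat.{0} R} {i : A ⟶ B} {p : B ⟶ C}
    (hip : Function.Exact i p) (hp : Function.Surjective p) :
    Function.Exact (charMap R p) (charMap R i) := by
  intro c
  refine ⟨fun hc => AddMonoidHom.exists_comp_eq_of_exact hip hp hc, ?_⟩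
  rintro ⟨d, rfl⟩
  change CharMod C at d
  refine AddMonoidHom.ext fun a => ?_
  exact (congrArg d (hip.apply_apply_eq_zero a)).trans (map_zero d)

def charShortComplex {A B C : ModuleCat.{0} R} (i : A ⟶ B) (p : B ⟶ C) (w : i ≫ p = 0) :
    ShortComplex (ModuleCat.{0} Rᵐᵒᵖ) :=
  ShortComplex.mk (charMap R p) (charMap R i) (by rw [← charMap_comp, w, charMap_zero])

lemma charShortComplex_exact {A B C : ModuleCat.{0} R} {i : A ⟶ B} {p : B ⟶ C}
    {w : i ≫ p = 0} (hS : (ShortComplex.mk i p w).ShortExact) :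
    (charShortComplex i p w).Exact :=
  (ShortComplex.ShortExact.moduleCat_exact_iff_function_exact _).2 <|
    charMap_exact_of_exact
      ((ShortComplex.ShortExact.moduleCat_exact_iff_function_exact _).1 hS.exact)
      hS.surjective_g

lemma IsPureSES.exists_section_charMap {A B C : ModuleCat.{0} R} {i : A ⟶ B} {p : B ⟶ C}
    (hpure : IsPureSES R i p) : ∃ σ : charObj R A ⟶ charObj R B, σ ≫ charMap R i = 𝟙 _ := by
  obtain ⟨⟨w, hS⟩, ρ, hρ⟩ := hpure
  have : Epi (charMap R i) :=
    (ModuleCat.epi_iff_surjective _).2 (charMap_surjective_of_injective i hS.injective_f)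
  exact ⟨(ShortComplex.Splitting.ofExactOfRetraction (charShortComplex i p w)
    (charShortComplex_exact hS) ρ hρ this).s, ShortComplex.Splitting.s_g _⟩

lemma IsDualityPair.mem_of_charObj_retract {𝓜 : Set (ModuleCat.{0} R)}
    {𝓒 : Set (ModuleCat.{0} Rᵐᵒᵖ)} (h : IsDualityPair R 𝓜 𝓒) {M N : ModuleCat.{0} R}
    (s : charObj R M ⟶ charObj R N) (r : charObj R N ⟶ charObj R M) (hsr : s ≫ r = 𝟙 _)
    (hN : N ∈ 𝓜) : M ∈ 𝓜 :=
  (h.mem_iff M).2 (h.summand_closed s r hsr ((h.mem_iff N).1 hN))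

end

/-- if `(𝓜, 𝓒)` is a duality pair, then `𝓜` is closed under pure submodules
and pure quotients. -/
theorem dualityPair_pure_closed (R : Type) [Ring R]
    (𝓜 : Set (ModuleCat.{0} R)) (𝓒 : Set (ModuleCat.{0} Rᵐᵒᵖ))
    (h : IsDualityPair R 𝓜 𝓒)
    (A B C : ModuleCat.{0} R) (i : A ⟶ B) (p : B ⟶ C)
    (hpure : IsPureSES R i p) (hB : B ∈ 𝓜) :
    A ∈ 𝓜 ∧ C ∈ 𝓜 := by
  obtain ⟨σ, hσ⟩ := hpure.exists_section_charMap
  obtain ⟨ρ, hρ⟩ := hpure.2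
  exact ⟨h.mem_of_charObj_retract σ _ hσ hB, h.mem_of_charObj_retract _ ρ hρ hB⟩

end
end

section
/- Let B be a class of R-modules containing all injectives. The class GI_B of Gorenstein B-injective modules is closed under extensions: if 0 → N' → N → N'' → 0 is exact with N', N'' ∈ GI_B, then N ∈ GI_B. -/
open CategoryTheory
/-- A homological complex is acyclic (exact) if it is exact at every degree. -/
def HomologicalComplex.IsAcyclic {C : Type*} [CategoryTheory.Category C]
    [CategoryTheory.Abelian C]
    {ι : Type*} {c : ComplexShape ι} (K : HomologicalComplex C c) : Prop :=
  ∀ i, K.ExactAt i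

/-- The contravariant functor `Hom_ℤ(-, ℚ/ℤ)` on abelian groups. -/
noncomputable abbrev charFunctor : AddCommGrpCatᵒᵖ ⥤ AddCommGrpCat :=
  CategoryTheory.preadditiveYoneda.obj (AddCommGrpCat.of (AddCircle (1 : ℚ)))
open CategoryTheory MulOpposite

noncomputable section

set_option synthInstance.maxHeartbeats 1000000
set_option maxHeartbeats 1000000

variable (R : Type) [Ring R]

instance moduleCatHasDerivedCategory : HasDerivedCategory (ModuleCat.{0} R) :=
  HasDerivedCategory.standard _

instance moduleCatHasExt : HasExt.{1} (ModuleCat.{0} R) :=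
  CategoryTheory.hasExt_of_hasDerivedCategory _

/-- `0 → X → Y → Z → 0` is a short exact sequence. -/
def IsSES {X Y Z : ModuleCat.{0} R} (i : X ⟶ Y) (p : Y ⟶ Z) : Prop :=
  ∃ w : i ≫ p = 0, (ShortComplex.mk i p w).ShortExact

/-- The left `Ext¹`-orthogonal class of a class of modules. -/
def leftOrth (𝓖 : Set (ModuleCat.{0} R)) : Set (ModuleCat.{0} R) :=
  {W | ∀ N ∈ 𝓖, Subsingleton (Abelian.Ext W N 1)}

/-- The right `Ext¹`-orthogonal class of a class of modules. -/
def rightOrth (𝓖 : Set (ModuleCat.{0} R)) : Set (ModuleCat.{0} R) :=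
  {V | ∀ N ∈ 𝓖, Subsingleton (Abelian.Ext N V 1)}

/-- A complex `E` is `Hom(𝓑,-)`-acyclic if `Hom(B, E)` is exact for every `B ∈ 𝓑`. -/
def homFromAcyclic (𝓑 : Set (ModuleCat.{0} R)) {ι : Type*} {c : ComplexShape ι}
    (E : HomologicalComplex (ModuleCat.{0} R) c) : Prop :=
  ∀ B ∈ 𝓑,
    (((preadditiveCoyoneda.obj (Opposite.op B)).mapHomologicalComplex _).obj E).IsAcyclic

/-- `N` is Gorenstein `𝓑`-injective: `N = Z₀E` for some exact `Hom(𝓑,-)`-acyclic complex `E`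
of injective modules. -/
def GorensteinBInjective (𝓑 : Set (ModuleCat.{0} R)) (N : ModuleCat.{0} R) : Prop :=
  ∃ E : ChainComplex (ModuleCat.{0} R) ℤ,
    (∀ n, Injective (E.X n)) ∧ E.IsAcyclic ∧ homFromAcyclic R 𝓑 E ∧
      Nonempty (N ≅ E.cycles 0)

/-- `(𝓧, 𝓨)` is a cotorsion pair: each class is the `Ext¹`-orthogonal of the other. -/
def IsCotorsionPair (𝓧 𝓨 : Set (ModuleCat.{0} R)) : Prop :=
  𝓧 = leftOrth R 𝓨 ∧ 𝓨 = rightOrth R 𝓧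

/-- A cotorsion pair is complete if it has enough injectives (special preenvelopes)
and enough projectives (special precovers). -/
def IsCompleteCP (𝓧 𝓨 : Set (ModuleCat.{0} R)) : Prop :=
  (∀ M : ModuleCat.{0} R, ∃ (Y X : ModuleCat.{0} R) (i : M ⟶ Y) (p : Y ⟶ X),
      Y ∈ 𝓨 ∧ X ∈ 𝓧 ∧ IsSES R i p) ∧
  (∀ M : ModuleCat.{0} R, ∃ (Y X : ModuleCat.{0} R) (i : Y ⟶ X) (p : X ⟶ M),
      Y ∈ 𝓨 ∧ X ∈ 𝓧 ∧ IsSES R i p)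

/-- A cotorsion pair is hereditary if `Extⁱ(X, Y) = 0` for all `i ≥ 1`. -/
def IsHereditaryCP (𝓧 𝓨 : Set (ModuleCat.{0} R)) : Prop :=
  ∀ X ∈ 𝓧, ∀ Y ∈ 𝓨, ∀ i : ℕ, 1 ≤ i → Subsingleton (Abelian.Ext X Y i)

end
open CategoryTheory
noncomputable section

/-!
Take complete resolutions `E'` of `N'` and `E''` of `N''`. The complete resolution of `N` is the
twisted direct sum `E_n = E'_n ⊞ E''_n` with differential `(x, y) ↦ (d' x + F y, d'' y)`, where the
twist `F_n : E''_{n+1} → E'_n` satisfies `d' F = -F d''`. The map `F_{-1}` is read off the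
extension: extend `N' → E'_0` to `u : N → E'_0`, factor `d' u` through `N''` and extend it along
`N'' ↪ E''_0`. The other `F_n` are built one degree at a time, keeping `d' F_n` zero on the cycles
of `E''`: upwards by `Hom(E''_{n+2}, -)`-exactness of `E'` (as `E''_{n+2}` is injective, hence in
`𝓑`), downwards by injectivity of `E'_n` and exactness of `E''`. Since `0 → E' → E → E'' → 0` is
degreewise split, it stays short exact after applying `Hom(B, -)`, so `E` and every `Hom(B, E)`
are exact; and `(u, p)` identifies `N` with the cycles of `E` in degree `0`.
-/

open Limits Opposite

theorem Int.exists_chain_through {P : ℤ → Sort*} (rel : ∀ n, P n → P (n + 1) → Prop)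
    (up : ∀ n x, ∃ y, rel n x y) (down : ∀ n y, ∃ x, rel n x y) (a : P (-1)) :
    ∃ f : ∀ n, P n, f (-1) = a ∧ ∀ n, rel n (f n) (f (n + 1)) := by
  choose U hU using up
  choose D hD using down
  refine ⟨fun n => Int.rec (Nat.rec (U (-1) a) fun k x => U k x)
    (Nat.rec a fun k x => D (Int.negSucc (k + 1)) x) n, rfl, ?_⟩
  rintro (k | _ | k)
  · exact hU _ _
  · exact hU _ _
  · exact hD _ _

section

variable {C : Type*} [Category C] [Abelian C]

theorem CategoryTheory.ShortComplex.ShortExact.mono_biprod_lift {S : ShortComplex C}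
    (hS : S.ShortExact) {A B : C} (u : S.X₂ ⟶ A) (v : S.X₃ ⟶ B) [Mono (S.f ≫ u)] [Mono v] :
    Mono (biprod.lift u (S.g ≫ v)) := by
  have := hS.mono_f
  refine Preadditive.mono_of_cancel_zero _ fun a ha => ?_
  have hag : a ≫ S.g = 0 := by
    rw [← cancel_mono v, Category.assoc, zero_comp]
    simpa using ha =≫ biprod.snd
  have hlift : hS.exact.lift a hag = 0 := by
    rw [← cancel_mono (S.f ≫ u), zero_comp, ← Category.assoc, hS.exact.lift_f]
    simpa using ha =≫ biprod.fst
  rw [← hS.exact.lift_f a hag, hlift, zero_comp]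

theorem HomologicalComplex.nonempty_iso_cycles_of_exact {ι : Type*} {c : ComplexShape ι}
    (K : HomologicalComplex C c) {i j : ι} (hij : c.next i = j) {N : C} (g : N ⟶ K.X i)
    [Mono g] (w : g ≫ K.d i j = 0) (hg : (ShortComplex.mk g (K.d i j) w).Exact) :
    Nonempty (N ≅ K.cycles i) :=
  ⟨IsLimit.conePointUniqueUpToIso hg.fIsKernel (K.cyclesIsKernel i j hij)⟩

namespace ChainComplex

theorem iCycles_comp_eq_zero_of_exactAt {K : ChainComplex C ℤ} {j : ℤ} (hK : K.ExactAt j)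
    {Y : C} (g : K.X j ⟶ Y) (hg : K.d (j + 1) j ≫ g = 0) : K.iCycles j ≫ g = 0 := by
  rw [K.exactAt_iff_exact_up_to_refinements (j + 1) j (j - 1) (by simp) (by simp)] at hK
  obtain ⟨A, π, _, x, hx⟩ := hK (K.iCycles j) (K.iCycles_d _ _)
  rw [← cancel_epi π, comp_zero, reassoc_of% hx, hg, comp_zero]

theorem exists_comp_d_eq_of_coyoneda_exactAt {K : ChainComplex C ℤ} {B : C} {j : ℤ}
    (hK : (((preadditiveCoyoneda.obj (op B)).mapHomologicalComplex _).obj K).ExactAt j)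
    (φ : B ⟶ K.X j) (hφ : φ ≫ K.d j (j - 1) = 0) :
    ∃ ψ : B ⟶ K.X (j + 1), ψ ≫ K.d (j + 1) j = φ := by
  rw [HomologicalComplex.exactAt_iff' _ (j + 1) j (j - 1) (by simp) (by simp),
    ShortComplex.ab_exact_iff] at hK
  exact hK φ hφ

abbrev twistedBiprod (E' E'' : ChainComplex C ℤ) (F : ∀ n, E''.X (n + 1) ⟶ E'.X n)
    (hF : ∀ n, F (n + 1) ≫ E'.d (n + 1) n = -(E''.d (n + 1 + 1) (n + 1) ≫ F n)) :
    ChainComplex C ℤ :=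
  ChainComplex.of (fun n => E'.X n ⊞ E''.X n)
    (fun n => biprod.lift (biprod.fst ≫ E'.d (n + 1) n + biprod.snd ≫ F n)
      (biprod.snd ≫ E''.d (n + 1) n))
    (fun n => by ext <;> simp [hF])

section TwistedBiprod

variable (E' E'' : ChainComplex C ℤ) (F : ∀ n, E''.X (n + 1) ⟶ E'.X n)
  (hF : ∀ n, F (n + 1) ≫ E'.d (n + 1) n = -(E''.d (n + 1 + 1) (n + 1) ≫ F n))

def twistedBiprodShortComplex : ShortComplex (ChainComplex C ℤ) where
  X₁ := E'
  X₂ := twistedBiprod E' E'' F hF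
  X₃ := E''
  f := { f := fun _ => biprod.inl
         comm' := by rintro _ n rfl; ext <;> simp }
  g := { f := fun _ => biprod.snd
         comm' := by rintro _ n rfl; ext <;> simp }
  zero := by ext; simp

theorem twistedBiprodShortComplex_shortExact :
    (twistedBiprodShortComplex E' E'' F hF).ShortExact :=
  HomologicalComplex.shortExact_of_degreewise_shortExact _ fun n =>
    (ShortComplex.Splitting.ofHasBinaryBiproduct (E'.X n) (E''.X n)).shortExact

theorem twistedBiprod_isAcyclic (h' : E'.IsAcyclic) (h'' : E''.IsAcyclic) :
    (twistedBiprod E' E'' F hF).IsAcyclic :=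
  (twistedBiprodShortComplex_shortExact E' E'' F hF).acyclic_X₂ h' h''

theorem twistedBiprod_map_isAcyclic {D : Type*} [Category D] [Abelian D] (G : C ⥤ D)
    [G.Additive] (h' : ((G.mapHomologicalComplex _).obj E').IsAcyclic)
    (h'' : ((G.mapHomologicalComplex _).obj E'').IsAcyclic) :
    ((G.mapHomologicalComplex _).obj (twistedBiprod E' E'' F hF)).IsAcyclic := by
  have hS : ((twistedBiprodShortComplex E' E'' F hF).map
      (G.mapHomologicalComplex _)).ShortExact :=
    HomologicalComplex.shortExact_of_degreewise_shortExact _ fun n =>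
      ((ShortComplex.Splitting.ofHasBinaryBiproduct (E'.X n) (E''.X n)).map G).shortExact
  exact hS.acyclic_X₂ h' h''

end TwistedBiprod

variable {E' E'' : ChainComplex C ℤ}

theorem exists_twist_succ {n : ℤ}
    (hE' : (((preadditiveCoyoneda.obj (op (E''.X (n + 1 + 1)))).mapHomologicalComplex _).obj
      E').ExactAt n)
    (φ : E''.X (n + 1) ⟶ E'.X n) (hφ : E''.iCycles (n + 1) ≫ φ ≫ E'.d n (n - 1) = 0) :
    ∃ ψ : E''.X (n + 1 + 1) ⟶ E'.X (n + 1),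
      E''.iCycles (n + 1 + 1) ≫ ψ ≫ E'.d (n + 1) (n + 1 - 1) = 0 ∧
        ψ ≫ E'.d (n + 1) n = -(E''.d (n + 1 + 1) (n + 1) ≫ φ) := by
  obtain ⟨ψ, hψ⟩ := exists_comp_d_eq_of_coyoneda_exactAt hE'
    (-(E''.d (n + 1 + 1) (n + 1) ≫ φ))
    (by rw [Preadditive.neg_comp, Category.assoc, ← E''.toCycles_i, Category.assoc, hφ,
      comp_zero, neg_zero])
  refine ⟨ψ, ?_, hψ⟩
  rw [add_sub_cancel_right, hψ]
  simp

theorem exists_twist_pred {n : ℤ} [Injective (E'.X n)] (hE'' : E''.ExactAt (n + 1))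
    (ψ : E''.X (n + 1 + 1) ⟶ E'.X (n + 1))
    (hψ : E''.iCycles (n + 1 + 1) ≫ ψ ≫ E'.d (n + 1) (n + 1 - 1) = 0) :
    ∃ φ : E''.X (n + 1) ⟶ E'.X n, E''.iCycles (n + 1) ≫ φ ≫ E'.d n (n - 1) = 0 ∧
      ψ ≫ E'.d (n + 1) n = -(E''.d (n + 1 + 1) (n + 1) ≫ φ) := by
  rw [add_sub_cancel_right] at hψ
  have hker : (ShortComplex.mk _ _ (E''.iCycles_d (n + 1 + 1) (n + 1))).Exact :=
    ShortComplex.exact_of_f_is_kernel _ (E''.cyclesIsKernel _ _ (by simp))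
  refine ⟨hker.descToInjective (-(ψ ≫ E'.d (n + 1) n)) (by simp [hψ]),
    iCycles_comp_eq_zero_of_exactAt hE'' _ ?_, ?_⟩
  · rw [hker.comp_descToInjective_assoc]
    simp
  · rw [hker.comp_descToInjective, neg_neg]

-- `f₀` lives in degree `-1 + 1` rather than `0`, otherwise `F (-1) = f₀` does not elaborate.
theorem exists_twist [∀ n, Injective (E'.X n)]
    (hE' : ∀ m, (((preadditiveCoyoneda.obj (op (E''.X m))).mapHomologicalComplex _).obj
      E').IsAcyclic)
    (hE'' : E''.IsAcyclic) (f₀ : E''.X (-1 + 1) ⟶ E'.X (-1))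
    (hf₀ : E''.iCycles (-1 + 1) ≫ f₀ ≫ E'.d (-1) (-1 - 1) = 0) :
    ∃ F : ∀ n, E''.X (n + 1) ⟶ E'.X n, F (-1) = f₀ ∧
      ∀ n, F (n + 1) ≫ E'.d (n + 1) n = -(E''.d (n + 1 + 1) (n + 1) ≫ F n) := by
  obtain ⟨f, hf₀', hf⟩ := Int.exists_chain_through
    (P := fun n => {φ : E''.X (n + 1) ⟶ E'.X n // E''.iCycles (n + 1) ≫ φ ≫ E'.d n (n - 1) = 0})
    (fun n φ ψ => ψ.1 ≫ E'.d (n + 1) n = -(E''.d (n + 1 + 1) (n + 1) ≫ φ.1))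
    (fun n φ => by
      obtain ⟨ψ, hψ, h⟩ := exists_twist_succ (hE' _ n) φ.1 φ.2
      exact ⟨⟨ψ, hψ⟩, h⟩)
    (fun n ψ => by
      obtain ⟨φ, hφ, h⟩ := exists_twist_pred (hE'' _) ψ.1 ψ.2
      exact ⟨⟨φ, hφ⟩, h⟩)
    ⟨f₀, hf₀⟩
  exact ⟨fun n => (f n).1, congrArg Subtype.val hf₀', hf⟩

variable {S : ShortComplex C} {m : ℤ}

theorem exists_twist_of_shortExact (hS : S.ShortExact) [Injective (E'.X (m + 1))]
    [Injective (E'.X m)] (e' : S.X₁ ≅ E'.cycles (m + 1)) (e'' : S.X₃ ≅ E''.cycles (m + 1)) :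
    ∃ (u : S.X₂ ⟶ E'.X (m + 1)) (f₀ : E''.X (m + 1) ⟶ E'.X m),
      S.f ≫ u = e'.hom ≫ E'.iCycles (m + 1) ∧
      S.g ≫ e''.hom ≫ E''.iCycles (m + 1) ≫ f₀ = -(u ≫ E'.d (m + 1) m) ∧
      E''.iCycles (m + 1) ≫ f₀ ≫ E'.d m (m - 1) = 0 := by
  have := hS.mono_f
  have := hS.epi_g
  obtain ⟨u, hu⟩ : ∃ u, S.f ≫ u = e'.hom ≫ E'.iCycles (m + 1) :=
    ⟨_, Injective.comp_factorThru _ _⟩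
  obtain ⟨w, hw⟩ : ∃ w, S.g ≫ w = u ≫ E'.d (m + 1) m :=
    ⟨_, hS.exact.g_desc _ (by simp [reassoc_of% hu])⟩
  obtain ⟨f₀, hf₀⟩ : ∃ f₀, e''.hom ≫ E''.iCycles (m + 1) ≫ f₀ = -w :=
    ⟨Injective.factorThru (-w) (e''.hom ≫ E''.iCycles (m + 1)), by
      rw [← Category.assoc, Injective.comp_factorThru]⟩
  have hwd : w ≫ E'.d m (m - 1) = 0 := by
    rw [← cancel_epi S.g, reassoc_of% hw]
    simp
  refine ⟨u, f₀, hu, by rw [hf₀, Preadditive.comp_neg, hw], ?_⟩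
  rw [← cancel_epi e''.hom, comp_zero, reassoc_of% hf₀, Preadditive.neg_comp, hwd, neg_zero]

theorem nonempty_iso_cycles_twistedBiprod {F : ∀ n, E''.X (n + 1) ⟶ E'.X n}
    {hF : ∀ n, F (n + 1) ≫ E'.d (n + 1) n = -(E''.d (n + 1 + 1) (n + 1) ≫ F n)}
    (hS : S.ShortExact) (e' : S.X₁ ≅ E'.cycles (m + 1)) (e'' : S.X₃ ≅ E''.cycles (m + 1))
    (u : S.X₂ ⟶ E'.X (m + 1)) (hu : S.f ≫ u = e'.hom ≫ E'.iCycles (m + 1))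
    (huF : S.g ≫ e''.hom ≫ E''.iCycles (m + 1) ≫ F m = -(u ≫ E'.d (m + 1) m)) :
    Nonempty (S.X₂ ≅ (twistedBiprod E' E'' F hF).cycles (m + 1)) := by
  let g : S.X₂ ⟶ (twistedBiprod E' E'' F hF).X (m + 1) :=
    biprod.lift u (S.g ≫ e''.hom ≫ E''.iCycles (m + 1))
  have hg : g ≫ (twistedBiprod E' E'' F hF).d (m + 1) m = 0 := by ext <;> simp [g, huF]
  have : Mono (S.f ≫ u) := by rw [hu]; infer_instance
  have : Mono g := hS.mono_biprod_lift u (e''.hom ≫ E''.iCycles (m + 1))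
  refine HomologicalComplex.nonempty_iso_cycles_of_exact _ (by simp) g hg ?_
  rw [ShortComplex.exact_iff_exact_up_to_refinements]
  intro A x hx
  have hx₂ : (x ≫ biprod.snd) ≫ E''.d (m + 1) m = 0 := by simpa using hx =≫ biprod.snd
  have hx₁ : x ≫ biprod.fst ≫ E'.d (m + 1) m = -(x ≫ biprod.snd ≫ F m) := by
    simpa [add_eq_zero_iff_eq_neg] using hx =≫ biprod.fst
  have := hS.epi_g
  obtain ⟨A', π, _, z, hz⟩ := surjective_up_to_refinements_of_epi S.g
    (E''.liftCycles (x ≫ biprod.snd) m (by simp) hx₂ ≫ e''.inv)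
  have hz' : π ≫ x ≫ biprod.snd = z ≫ S.g ≫ e''.hom ≫ E''.iCycles (m + 1) := by
    simpa using hz =≫ (e''.hom ≫ E''.iCycles (m + 1))
  have ht : (π ≫ x ≫ biprod.fst - z ≫ u) ≫ E'.d (m + 1) m = 0 := by
    simp [hx₁, reassoc_of% hz', huF]
  refine ⟨A', π, inferInstance, z + (E'.liftCycles _ m (by simp) ht ≫ e'.inv) ≫ S.f, ?_⟩
  ext
  · simp [g, hu]
  · simp [g, hz']

end ChainComplex

end

/-- the class of Gorenstein `𝓑`-injective modules is closed under extensions. -/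
theorem gorensteinBInjective_closed_extensions (R : Type) [Ring R]
    (𝓑 : Set (ModuleCat.{0} R)) (hB : ∀ I : ModuleCat.{0} R, Injective I → I ∈ 𝓑)
    (N' N N'' : ModuleCat.{0} R) (i : N' ⟶ N) (p : N ⟶ N'') (hses : IsSES R i p)
    (h' : GorensteinBInjective R 𝓑 N') (h'' : GorensteinBInjective R 𝓑 N'') :
    GorensteinBInjective R 𝓑 N := by
  obtain ⟨_, hS⟩ := hses
  obtain ⟨E', hE'inj, hE'ac, hE'B, ⟨e'⟩⟩ := h'
  obtain ⟨E'', hE''inj, hE''ac, hE''B, ⟨e''⟩⟩ := h''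
  obtain ⟨u, f₀, hu, huf₀, hf₀⟩ := ChainComplex.exists_twist_of_shortExact (m := -1) hS e' e''
  obtain ⟨F, rfl, hF⟩ :=
    ChainComplex.exists_twist (fun n => hE'B _ (hB _ (hE''inj n))) hE''ac f₀ hf₀
  exact ⟨ChainComplex.twistedBiprod E' E'' F hF, fun _ => inferInstance,
    ChainComplex.twistedBiprod_isAcyclic E' E'' F hF hE'ac hE''ac,
    fun B hB => ChainComplex.twistedBiprod_map_isAcyclic E' E'' F hF _ (hE'B B hB) (hE''B B hB),
    ChainComplex.nonempty_iso_cycles_twistedBiprod hS e' e'' u hu huf₀⟩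
end
end

section
/- Let M be an R°-module fitting into a short exact sequence 0 → A → B → M → 0 with A and B FP-injective. If E is an exact complex of injective R°-modules such that Hom(A', E) is exact for every FP-injective A' (i.e., Z₀E is Ding injective), then Hom(M, E) is also exact. -/
/-!
Since each `E n` is injective, `Hom(-, E n)` is exact, so `0 → A → B → M → 0` yields a short
exact sequence of complexes `0 → Hom(M, E) → Hom(B, E) → Hom(A, E) → 0`. In its long exact
homology sequence the two right-hand complexes are acyclic, hence so is `Hom(M, E)`.
-/

open CategoryTheory
open CategoryTheory MulOpposite

open CategoryTheory MulOpposite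
noncomputable section

/-- An `R°`-module is FP-injective (absolutely pure) if `Ext¹(F, A) = 0` for every
finitely presented `F`. -/
def FPInjective (R : Type) [Ring R] (A : ModuleCat.{0} Rᵐᵒᵖ) : Prop :=
  ∀ F : ModuleCat.{0} Rᵐᵒᵖ, Module.FinitePresentation Rᵐᵒᵖ F →
    Subsingleton (Abelian.Ext F A 1)

namespace CategoryTheory.ShortComplex.ShortExact

variable {C : Type*} [Category C] [Abelian C] {ι : Type*} {c : ComplexShape ι}
  {S : ShortComplex (HomologicalComplex C c)}

lemma isAcyclic_X₁ (hS : S.ShortExact) (h₂ : S.X₂.IsAcyclic) (h₃ : S.X₃.IsAcyclic) :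
    S.X₁.IsAcyclic := fun j ↦
  hS.exactAt_X₁ j ((h₂ j).isZero_homology.mono _) (fun i _ ↦ (h₃ i).isZero_homology.epi _)

end CategoryTheory.ShortComplex.ShortExact

namespace HomologicalComplex

variable {C : Type*} [Category C] [Preadditive C] {ι : Type*} {c : ComplexShape ι}

def preadditiveYoneda (E : HomologicalComplex C c) :
    Cᵒᵖ ⥤ HomologicalComplex AddCommGrpCat c where
  obj X := ((preadditiveCoyoneda.obj X).mapHomologicalComplex c).obj E
  map f := (NatTrans.mapHomologicalComplex (preadditiveCoyoneda.map f) c).app E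

instance (E : HomologicalComplex C c) : E.preadditiveYoneda.Additive where
  map_add {_ _ f g} := by
    ext n : 2
    rw [add_f_apply]
    ext x
    exact Preadditive.add_comp _ _ _ f.unop g.unop x

end HomologicalComplex

lemma CategoryTheory.ShortComplex.ShortExact.op_map_preadditiveYoneda {C : Type*} [Category C]
    [Abelian C] {ι : Type*} {c : ComplexShape ι} {S : ShortComplex C} (hS : S.ShortExact)
    (E : HomologicalComplex C c) (hE : ∀ n, Injective (E.X n)) :
    (S.op.map E.preadditiveYoneda).ShortExact :=
  HomologicalComplex.shortExact_of_degreewise_shortExact _ fun n ↦ by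
    have := hE n
    have : Limits.PreservesFiniteColimits (preadditiveYoneda.obj (E.X n)) :=
      Limits.comp_preservesFiniteColimits (preadditiveYonedaObj (E.X n)) (forget₂ _ AddCommGrpCat)
    exact hS.op.map_of_exact (preadditiveYoneda.obj (E.X n))

theorem hom_acyclic_of_extension_of_fpInjective_general (R : Type) [Ring R]
    (A B M : ModuleCat.{0} Rᵐᵒᵖ) (i : A ⟶ B) (p : B ⟶ M) (hses : IsSES Rᵐᵒᵖ i p)
    (hA : FPInjective R A) (hB : FPInjective R B)
    (E : ChainComplex (ModuleCat.{0} Rᵐᵒᵖ) ℤ)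
    (hinj : ∀ n, Injective (E.X n))
    (hE : ∀ A' : ModuleCat.{0} Rᵐᵒᵖ, FPInjective R A' →
      (((preadditiveCoyoneda.obj (Opposite.op A')).mapHomologicalComplex _).obj E).IsAcyclic) :
    (((preadditiveCoyoneda.obj (Opposite.op M)).mapHomologicalComplex _).obj E).IsAcyclic := by
  obtain ⟨_, hS⟩ := hses
  exact (hS.op_map_preadditiveYoneda E hinj).isAcyclic_X₁ (hE B hB) (hE A hA)

/-- if `0 → A → B → M → 0` is exact with `A, B` FP-injective, and `E` is an
exact complex of injective `R°`-modules such that `Hom(A', E)` is exact for every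
FP-injective `A'`, then `Hom(M, E)` is exact. -/
theorem hom_acyclic_of_extension_of_fpInjective (R : Type) [Ring R]
    (A B M : ModuleCat.{0} Rᵐᵒᵖ) (i : A ⟶ B) (p : B ⟶ M) (hses : IsSES Rᵐᵒᵖ i p)
    (hA : FPInjective R A) (hB : FPInjective R B)
    (E : ChainComplex (ModuleCat.{0} Rᵐᵒᵖ) ℤ)
    (hinj : ∀ n, Injective (E.X n)) (hexact : E.IsAcyclic)
    (hE : ∀ A' : ModuleCat.{0} Rᵐᵒᵖ, FPInjective R A' →
      (((preadditiveCoyoneda.obj (Opposite.op A')).mapHomologicalComplex _).obj E).IsAcyclic) :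
    (((preadditiveCoyoneda.obj (Opposite.op M)).mapHomologicalComplex _).obj E).IsAcyclic :=
  hom_acyclic_of_extension_of_fpInjective_general R A B M i p hses hA hB E hinj hE

end
end
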